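/- The function f(q) = (1+q)⁴ / ( q^(q/(1+q)) (2+q) ) is strictly increasing on the open interval (0,1). -/

import Mathlib

open Real

/-- `f(q) = (1+q)⁴ / ( q^(q/(1+q)) (2+q) )`. -/
noncomputable def ssyf (q : ℝ) : ℝ :=
  (1 + q) ^ 4 / (q ^ (q / (1 + q)) * (2 + q))

noncomputable def ssyg (q : ℝ) : ℝ :=
  4 * Real.log (1 + q) - q / (1 + q) * Real.log q - Real.log (2 + q)

lemma ssyg_hasDerivAt {x : ℝ} (hx : 0 < x) :
    HasDerivAt ssyg
      (((5 + 2 * x) * (1 + x) - (2 + x) * Real.log x) / ((1 + x) ^ 2 * (2 + x))) x := by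
  have h1 : (0:ℝ) < 1 + x := by linarith
  have h2 : (0:ℝ) < 2 + x := by linarith
  have hid : HasDerivAt (fun q : ℝ => q) 1 x := hasDerivAt_id x
  have ha : HasDerivAt (fun q : ℝ => 1 + q) 1 x := hid.const_add 1
  have hb : HasDerivAt (fun q : ℝ => 2 + q) 1 x := hid.const_add 2
  have hla : HasDerivAt (fun q : ℝ => Real.log (1 + q)) (1 / (1 + x)) x := ha.log h1.ne'
  have hlb : HasDerivAt (fun q : ℝ => Real.log (2 + q)) (1 / (2 + x)) x := hb.log h2.ne'
  have hlx : HasDerivAt Real.log x⁻¹ x := Real.hasDerivAt_log hx.ne'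
  have hdiv : HasDerivAt (fun q : ℝ => q / (1 + q))
      ((1 * (1 + x) - x * 1) / (1 + x) ^ 2) x := hid.div ha h1.ne'
  have hmul : HasDerivAt (fun q : ℝ => q / (1 + q) * Real.log q)
      ((1 * (1 + x) - x * 1) / (1 + x) ^ 2 * Real.log x + x / (1 + x) * x⁻¹) x :=
    hdiv.mul hlx
  have h := ((hla.const_mul 4).sub hmul).sub hlb
  refine h.congr_deriv ?_
  field_simp
  ring

lemma ssyg_strictMonoOn : StrictMonoOn ssyg (Set.Ioo (0 : ℝ) 1) := by
  apply strictMonoOn_of_deriv_pos (convex_Ioo 0 1)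
  · intro x hx
    exact ((ssyg_hasDerivAt hx.1).continuousAt).continuousWithinAt
  · intro x hx
    rw [interior_Ioo] at hx
    obtain ⟨hx0, hx1⟩ := hx
    rw [(ssyg_hasDerivAt hx0).deriv]
    have h1 : (0:ℝ) < 1 + x := by linarith
    have h2 : (0:ℝ) < 2 + x := by linarith
    have hlog : Real.log x < 0 := Real.log_neg hx0 hx1
    apply div_pos
    · nlinarith
    · positivity

lemma ssyf_log {q : ℝ} (hq : 0 < q) (hq1 : q < 1) : Real.log (ssyf q) = ssyg q := by
  have h1 : (0:ℝ) < 1 + q := by linarith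
  have h2 : (0:ℝ) < 2 + q := by linarith
  have hr : (0:ℝ) < q ^ (q / (1 + q)) := Real.rpow_pos_of_pos hq _
  rw [ssyf, ssyg, Real.log_div (by positivity) (by positivity),
    Real.log_mul hr.ne' h2.ne', Real.log_pow, Real.log_rpow hq]
  push_cast
  ring

theorem ssyf_strictMonoOn : StrictMonoOn ssyf (Set.Ioo (0 : ℝ) 1) := by
  intro p hp q hq hpq
  have hfp : 0 < ssyf p := by
    have := hp.1
    rw [ssyf]
    have : (0:ℝ) < p ^ (p / (1 + p)) := Real.rpow_pos_of_pos hp.1 _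
    have h1 : (0:ℝ) < 1 + p := by linarith [hp.1]
    have h2 : (0:ℝ) < 2 + p := by linarith [hp.1]
    positivity
  have hfq : 0 < ssyf q := by
    rw [ssyf]
    have : (0:ℝ) < q ^ (q / (1 + q)) := Real.rpow_pos_of_pos hq.1 _
    have h1 : (0:ℝ) < 1 + q := by linarith [hq.1]
    have h2 : (0:ℝ) < 2 + q := by linarith [hq.1]
    positivity
  rw [← Real.log_lt_log_iff hfp hfq, ssyf_log hp.1 hp.2, ssyf_log hq.1 hq.2]
  exact ssyg_strictMonoOn hp hq hpq
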